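/- Let W be a function analytic and nonvanishing on the upper half-plane Im z > 0. Assume that for every positive integer r, all points w₁,…,w_r with Im w_α > 0, and all complex numbers c₁,…,c_r, the sum ∑_{α,β=1}^r c_α·conj(c_β)·[K_W(w_α, w_β + i) + K_W(w_α + i, w_β)] is a nonnegative real number. Then Re{W(z)/W(z+i)} ≥ 0 for every z with Im z > 0. -/

import Mathlib

open Complex ComplexConjugate
open scoped ComplexOrder

/-
The hypothesis with `r = 1` and `c₁ = 1` already suffices: at the pair `(z, z + i)` both kernel
denominators equal the positive real `2π(2 Im z + 1)`, so the sum is `2 Re(W(z) conj W(z+i))`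
over that positive number, and `Re(W(z) conj W(z+i))` has the sign of `Re(W(z)/W(z+i))`.
-/

/-- The reproducing kernel `K_W(w,z) = W(z) conj(W(w)) / (2πi (conj w − z))`. -/
noncomputable def KW (W : ℂ → ℂ) (w z : ℂ) : ℂ :=
  W z * conj (W w) / (2 * Real.pi * I * (conj w - z))

lemma Complex.re_div_eq_re_mul_conj_div_normSq (a b : ℂ) :
    (a / b).re = (a * conj b).re / normSq b := by
  rw [div_eq_mul_inv, inv_def, ← mul_assoc, re_mul_ofReal, div_eq_mul_inv]

lemma Complex.re_div_nonneg_of_re_mul_conj_nonneg {a b : ℂ} (h : 0 ≤ (a * conj b).re) :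
    0 ≤ (a / b).re := by
  rw [re_div_eq_re_mul_conj_div_normSq]
  exact div_nonneg h (normSq_nonneg b)

lemma two_pi_I_mul_conj_sub_add_I (z : ℂ) :
    2 * (Real.pi : ℂ) * I * (conj z - (z + I)) = ((2 * Real.pi * (2 * z.im + 1) : ℝ) : ℂ) := by
  rw [show conj z - (z + I) = -((z - conj z) + I) by ring, sub_conj]
  push_cast
  linear_combination (-2 * (Real.pi : ℂ) * (2 * z.im + 1)) * I_sq

lemma KW_self_add_I_add_KW_add_I_self (W : ℂ → ℂ) (z : ℂ) :
    KW W z (z + I) + KW W (z + I) z =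
      ((2 * (W z * conj (W (z + I))).re / (2 * Real.pi * (2 * z.im + 1)) : ℝ) : ℂ) := by
  have hden : conj (z + I) - z = conj z - (z + I) := by
    rw [map_add, conj_I]
    ring
  have hnum : W (z + I) * conj (W z) = conj (W z * conj (W (z + I))) := by
    rw [map_mul, conj_conj, mul_comm]
  rw [KW, KW, hden, two_pi_I_mul_conj_sub_add_I, ← add_div, hnum, add_comm, add_conj]
  push_cast
  ring

theorem stmt_6_general (W : ℂ → ℂ)
    (hpos : ∀ r : ℕ, 0 < r → ∀ w : Fin r → ℂ, (∀ α, 0 < (w α).im) → ∀ c : Fin r → ℂ,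
      0 ≤ ∑ α, ∑ β, c α * conj (c β) *
        (KW W (w α) (w β + I) + KW W (w α + I) (w β))) :
    ∀ z : ℂ, 0 < z.im → 0 ≤ (W z / W (z + I)).re := by
  intro z hz
  have hsingle := hpos 1 one_pos (fun _ => z) (fun _ => hz) (fun _ => 1)
  simp only [Fin.sum_univ_one, map_one, one_mul, KW_self_add_I_add_KW_add_I_self,
    zero_le_real] at hsingle
  have hden : 0 < 2 * Real.pi * (2 * z.im + 1) := by positivity
  apply re_div_nonneg_of_re_mul_conj_nonneg
  linarith [(le_div_iff₀ hden).mp hsingle]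

theorem stmt_6 (W : ℂ → ℂ)
    (hW : DifferentiableOn ℂ W {z : ℂ | 0 < z.im})
    (hW0 : ∀ z : ℂ, 0 < z.im → W z ≠ 0)
    (hpos : ∀ r : ℕ, 0 < r → ∀ w : Fin r → ℂ, (∀ α, 0 < (w α).im) → ∀ c : Fin r → ℂ,
      0 ≤ ∑ α, ∑ β, c α * conj (c β) *
        (KW W (w α) (w β + I) + KW W (w α + I) (w β))) :
    ∀ z : ℂ, 0 < z.im → 0 ≤ (W z / W (z + I)).re :=
  stmt_6_general W hpos
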